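/- Let L > 0, T > 0 and fix feedback gains α, β with 0 < |α| < 1 and β > 0. For every classical solution u of the closed-loop linear KP-II system on [0,L]² × [0,T] and every t ∈ (0,T), the energy E(t) is differentiable and satisfies E′(t) = −((1−α²)/2) ∫₀^L u_x(0,y,t)² dy − β ∫₀^L u(x,L,t)² dx − ½ ∫₀^L ((∂ₓ⁻¹ u_y)(0,y,t))² dy. -/

import Mathlib

open MeasureTheory Real

noncomputable section

/-- Partial derivative in `x` of `u(x,y,t)`. -/
def pdx (u : ℝ → ℝ → ℝ → ℝ) (x y t : ℝ) : ℝ := deriv (fun x' => u x' y t) x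

/-- Third partial derivative in `x` of `u(x,y,t)`. -/
def pdx3 (u : ℝ → ℝ → ℝ → ℝ) (x y t : ℝ) : ℝ := iteratedDeriv 3 (fun x' => u x' y t) x

/-- Partial derivative in `y` of `u(x,y,t)`. -/
def pdy (u : ℝ → ℝ → ℝ → ℝ) (x y t : ℝ) : ℝ := deriv (fun y' => u x y' t) y

/-- Second partial derivative in `y` of `u(x,y,t)`. -/
def pdy2 (u : ℝ → ℝ → ℝ → ℝ) (x y t : ℝ) : ℝ := iteratedDeriv 2 (fun y' => u x y' t) y

/-- Partial derivative in `t` of `u(x,y,t)`. -/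
def pdt (u : ℝ → ℝ → ℝ → ℝ) (x y t : ℝ) : ℝ := deriv (fun t' => u x y t') t

/-- The nonlocal operator `(∂ₓ⁻¹ w)(x,y) = -∫ₓ^L w(s,y) ds`. -/
def pxInv (L : ℝ) (w : ℝ → ℝ → ℝ) (x y : ℝ) : ℝ := -(∫ s in x..L, w s y)

/-- A classical solution of the closed-loop linear KP-II system on `[0,L]² × [0,T]`:
`u` is `C³`, satisfies `u_t + u_x + u_xxx + ∂ₓ⁻¹ u_yy = 0` on `Ω × (0,T)` and the
boundary feedback conditions for all `t ∈ [0,T]`. -/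
def IsKPSolution (L T α β : ℝ) (u : ℝ → ℝ → ℝ → ℝ) : Prop :=
  ContDiff ℝ 3 (fun p : ℝ × ℝ × ℝ => u p.1 p.2.1 p.2.2) ∧
  (∀ x ∈ Set.Ioo (0:ℝ) L, ∀ y ∈ Set.Ioo (0:ℝ) L, ∀ t ∈ Set.Ioo (0:ℝ) T,
      pdt u x y t + pdx u x y t + pdx3 u x y t
        + pxInv L (fun s y' => pdy2 u s y' t) x y = 0) ∧
  (∀ y ∈ Set.Icc (0:ℝ) L, ∀ t ∈ Set.Icc (0:ℝ) T,
      u 0 y t = 0 ∧ u L y t = 0 ∧ pdx u L y t = α * pdx u 0 y t) ∧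
  (∀ x ∈ Set.Icc (0:ℝ) L, ∀ t ∈ Set.Icc (0:ℝ) T,
      pdy u x L t = β * pdx u x L t ∧ pdy u x 0 t = 0)

/-- The energy `E(t) = ½ ∫_Ω u(x,y,t)² dx dy`. -/
def energy (L : ℝ) (u : ℝ → ℝ → ℝ → ℝ) (t : ℝ) : ℝ :=
  (1/2) * ∫ x in (0:ℝ)..L, ∫ y in (0:ℝ)..L, (u x y t)^2

/-!
Differentiating under the integral sign gives `E'(t) = ∫_Ω u u_t`, and the equation replaces
`u_t` by `-u_x - u_xxx - ∂ₓ⁻¹ u_yy`. Each of the three terms integrates exactly.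
`u u_x = (u²/2)_x` contributes nothing by the Dirichlet conditions at `x = 0, L`.
`u u_xxx = (u u_xx - u_x²/2)_x` leaves `(u_x(0)² - u_x(L)²)/2 = (1 - α²)/2 · u_x(0)²`.
For the nonlocal term put `w = ∂ₓ⁻¹ u_y`, so that `w_x = u_y` and `w_y = ∂ₓ⁻¹ u_yy`: integrating
`u w_y` by parts in `y` and then `w w_x` in `x` gives `β ∫ u(x,L)² + ½ ∫ w(0,y)²`, since
`w(x,L) = β u(x,L)` by the feedback law at `y = L`, `w(x,0) = 0` and `w(L,y) = 0`.
-/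

open Set Function intervalIntegral

section IteratedIntegrals

variable {a b c d : ℝ}

theorem intervalIntegral_intervalIntegral_swap_of_continuous {f : ℝ → ℝ → ℝ}
    (hf : Continuous (uncurry f)) :
    ∫ x in a..b, ∫ y in c..d, f x y = ∫ y in c..d, ∫ x in a..b, f x y :=
  MeasureTheory.intervalIntegral_intervalIntegral_swap <|
    (hf.continuousOn.integrableOn_compact (isCompact_uIcc.prod isCompact_uIcc)).mono_set
      (prod_mono uIoc_subset_uIcc uIoc_subset_uIcc)

theorem intervalIntegral_intervalIntegral_add {f g : ℝ → ℝ → ℝ}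
    (hf : Continuous (uncurry f)) (hg : Continuous (uncurry g)) :
    ∫ x in a..b, ∫ y in c..d, (f x y + g x y)
      = (∫ x in a..b, ∫ y in c..d, f x y) + ∫ x in a..b, ∫ y in c..d, g x y := by
  simp_rw [integral_add ((hf.uncurry_left _).intervalIntegrable c d)
    ((hg.uncurry_left _).intervalIntegrable c d)]
  exact integral_add
    ((continuous_parametric_intervalIntegral_of_continuous' hf c d).intervalIntegrable a b)
    ((continuous_parametric_intervalIntegral_of_continuous' hg c d).intervalIntegrable a b)

theorem hasDerivAt_intervalIntegral_of_continuous {f f' : ℝ → ℝ → ℝ}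
    (hf : Continuous (uncurry f)) (hf' : Continuous (uncurry f'))
    (hd : ∀ s t, HasDerivAt (f s) (f' s t) t) (t₀ : ℝ) :
    HasDerivAt (fun t => ∫ s in a..b, f s t) (∫ s in a..b, f' s t₀) t₀ := by
  obtain ⟨C, hC⟩ := (isCompact_uIcc.prod (isCompact_closedBall t₀ 1)).exists_bound_of_continuousOn
    hf'.continuousOn
  exact (hasDerivAt_integral_of_dominated_loc_of_deriv_le (bound := fun _ => C)
    (Metric.ball_mem_nhds t₀ one_pos)
    (Filter.Eventually.of_forall fun t => (hf.uncurry_right t).aestronglyMeasurable)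
    ((hf.uncurry_right t₀).intervalIntegrable a b)
    (hf'.uncurry_right t₀).aestronglyMeasurable
    (Filter.Eventually.of_forall fun s hs t ht =>
      hC (s, t) ⟨uIoc_subset_uIcc hs, Metric.ball_subset_closedBall ht⟩)
    intervalIntegrable_const
    (Filter.Eventually.of_forall fun s _ t _ => hd s t)).2

end IteratedIntegrals

section IntegrationByParts

variable {a b c d : ℝ}

theorem integral_mul_deriv_self {f f' : ℝ → ℝ} (hf : ∀ x ∈ uIcc a b, HasDerivAt f (f' x) x)
    (hint : IntervalIntegrable (fun x => f x * f' x) volume a b) :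
    ∫ x in a..b, f x * f' x = f b ^ 2 / 2 - f a ^ 2 / 2 :=
  integral_eq_sub_of_hasDerivAt (f := fun x => f x ^ 2 / 2)
    (fun x hx => (((hf x hx).pow 2).div_const 2).congr_deriv (by ring)) hint

theorem integral_mul_third_deriv {f f₁ f₂ f₃ : ℝ → ℝ}
    (h₀ : ∀ x ∈ uIcc a b, HasDerivAt f (f₁ x) x) (h₁ : ∀ x ∈ uIcc a b, HasDerivAt f₁ (f₂ x) x)
    (h₂ : ∀ x ∈ uIcc a b, HasDerivAt f₂ (f₃ x) x)
    (hint : IntervalIntegrable (fun x => f x * f₃ x) volume a b) :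
    ∫ x in a..b, f x * f₃ x
      = (f b * f₂ b - f₁ b ^ 2 / 2) - (f a * f₂ a - f₁ a ^ 2 / 2) :=
  integral_eq_sub_of_hasDerivAt (f := fun x => f x * f₂ x - f₁ x ^ 2 / 2)
    (fun x hx => (((h₀ x hx).mul (h₂ x hx)).sub (((h₁ x hx).pow 2).div_const 2)).congr_deriv
      (by ring)) hint

theorem integral_integral_mul_deriv_fst {v v₁ : ℝ → ℝ → ℝ}
    (hv : Continuous (uncurry v)) (hv₁ : Continuous (uncurry v₁))
    (hd : ∀ x y, HasDerivAt (v · y) (v₁ x y) x) :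
    ∫ x in a..b, ∫ y in c..d, v x y * v₁ x y = ∫ y in c..d, (v b y ^ 2 / 2 - v a y ^ 2 / 2) := by
  have hc : Continuous (uncurry fun x y => v x y * v₁ x y) := hv.mul hv₁
  rw [intervalIntegral_intervalIntegral_swap_of_continuous hc]
  exact integral_congr fun y _ => integral_mul_deriv_self (fun x _ => hd x y)
    ((hc.uncurry_right y).intervalIntegrable a b)

theorem integral_integral_mul_third_deriv_fst {v v₁ v₂ v₃ : ℝ → ℝ → ℝ}
    (hv : Continuous (uncurry v)) (hv₃ : Continuous (uncurry v₃))
    (h₀ : ∀ x y, HasDerivAt (v · y) (v₁ x y) x) (h₁ : ∀ x y, HasDerivAt (v₁ · y) (v₂ x y) x)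
    (h₂ : ∀ x y, HasDerivAt (v₂ · y) (v₃ x y) x) :
    ∫ x in a..b, ∫ y in c..d, v x y * v₃ x y
      = ∫ y in c..d, ((v b y * v₂ b y - v₁ b y ^ 2 / 2) - (v a y * v₂ a y - v₁ a y ^ 2 / 2)) := by
  have hc : Continuous (uncurry fun x y => v x y * v₃ x y) := hv.mul hv₃
  rw [intervalIntegral_intervalIntegral_swap_of_continuous hc]
  exact integral_congr fun y _ => integral_mul_third_deriv (fun x _ => h₀ x y)
    (fun x _ => h₁ x y) (fun x _ => h₂ x y) ((hc.uncurry_right y).intervalIntegrable a b)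

theorem integral_integral_mul_deriv_snd {v v' w q : ℝ → ℝ → ℝ}
    (hv : Continuous (uncurry v)) (hv' : Continuous (uncurry v'))
    (hw : Continuous (uncurry w)) (hq : Continuous (uncurry q))
    (hvy : ∀ x y, HasDerivAt (v x) (v' x y) y) (hwx : ∀ x y, HasDerivAt (w · y) (v' x y) x)
    (hwy : ∀ x y, HasDerivAt (w x) (q x y) y) :
    ∫ x in a..b, ∫ y in c..d, v x y * q x y
      = (∫ x in a..b, (v x d * w x d - v x c * w x c))
        - ∫ y in c..d, (w b y ^ 2 / 2 - w a y ^ 2 / 2) := by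
  have hy : ∀ x, ∫ y in c..d, v x y * q x y
      = (v x d * w x d - v x c * w x c) - ∫ y in c..d, w x y * v' x y := fun x => by
    simp_rw [integral_mul_deriv_eq_deriv_mul (fun y _ => hvy x y) (fun y _ => hwy x y)
      ((hv'.uncurry_left x).intervalIntegrable c d)
      ((hq.uncurry_left x).intervalIntegrable c d), mul_comm (v' x _)]
  simp_rw [hy]
  rw [intervalIntegral.integral_sub, integral_integral_mul_deriv_fst hw hv' hwx]
  · exact (((hv.uncurry_right d).mul (hw.uncurry_right d)).sub
      ((hv.uncurry_right c).mul (hw.uncurry_right c))).intervalIntegrable a b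
  · have hc : Continuous (uncurry fun x y => w x y * v' x y) := hw.mul hv'
    exact (continuous_parametric_intervalIntegral_of_continuous' hc c d).intervalIntegrable a b

end IntegrationByParts

def uncurry₃ (u : ℝ → ℝ → ℝ → ℝ) (p : ℝ × ℝ × ℝ) : ℝ := u p.1 p.2.1 p.2.2

section PartialDerivatives

variable {u : ℝ → ℝ → ℝ → ℝ} {m n : WithTop ℕ∞}

theorem hasDerivAt_slice_fst (hu : Differentiable ℝ (uncurry₃ u)) (x y t : ℝ) :
    HasDerivAt (fun x' => u x' y t) (fderiv ℝ (uncurry₃ u) (x, y, t) (1, 0, 0)) x :=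
  (hu _).hasFDerivAt.comp_hasDerivAt x ((hasDerivAt_id x).prodMk (hasDerivAt_const x (y, t)))

theorem hasDerivAt_slice_snd (hu : Differentiable ℝ (uncurry₃ u)) (x y t : ℝ) :
    HasDerivAt (fun y' => u x y' t) (fderiv ℝ (uncurry₃ u) (x, y, t) (0, 1, 0)) y :=
  (hu _).hasFDerivAt.comp_hasDerivAt y
    ((hasDerivAt_const y x).prodMk ((hasDerivAt_id y).prodMk (hasDerivAt_const y t)))

theorem hasDerivAt_slice_thd (hu : Differentiable ℝ (uncurry₃ u)) (x y t : ℝ) :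
    HasDerivAt (fun t' => u x y t') (fderiv ℝ (uncurry₃ u) (x, y, t) (0, 0, 1)) t :=
  (hu _).hasFDerivAt.comp_hasDerivAt t
    ((hasDerivAt_const t x).prodMk ((hasDerivAt_const t y).prodMk (hasDerivAt_id t)))

theorem hasDerivAt_pdx (hu : Differentiable ℝ (uncurry₃ u)) (x y t : ℝ) :
    HasDerivAt (fun x' => u x' y t) (pdx u x y t) x :=
  (hasDerivAt_slice_fst hu x y t).differentiableAt.hasDerivAt

theorem hasDerivAt_pdy (hu : Differentiable ℝ (uncurry₃ u)) (x y t : ℝ) :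
    HasDerivAt (fun y' => u x y' t) (pdy u x y t) y :=
  (hasDerivAt_slice_snd hu x y t).differentiableAt.hasDerivAt

theorem hasDerivAt_pdt (hu : Differentiable ℝ (uncurry₃ u)) (x y t : ℝ) :
    HasDerivAt (fun t' => u x y t') (pdt u x y t) t :=
  (hasDerivAt_slice_thd hu x y t).differentiableAt.hasDerivAt

theorem contDiff_pdx (hu : ContDiff ℝ n (uncurry₃ u)) (hmn : m + 1 ≤ n) :
    ContDiff ℝ m (uncurry₃ (pdx u)) := by
  have hd := hu.differentiable (zero_lt_one.trans_le (le_add_self.trans hmn)).ne'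
  convert (hu.fderiv_right hmn).clm_apply (contDiff_const (c := ((1, 0, 0) : ℝ × ℝ × ℝ))) using 1
  exact funext fun p => (hasDerivAt_slice_fst hd p.1 p.2.1 p.2.2).deriv

theorem contDiff_pdy (hu : ContDiff ℝ n (uncurry₃ u)) (hmn : m + 1 ≤ n) :
    ContDiff ℝ m (uncurry₃ (pdy u)) := by
  have hd := hu.differentiable (zero_lt_one.trans_le (le_add_self.trans hmn)).ne'
  convert (hu.fderiv_right hmn).clm_apply (contDiff_const (c := ((0, 1, 0) : ℝ × ℝ × ℝ))) using 1
  exact funext fun p => (hasDerivAt_slice_snd hd p.1 p.2.1 p.2.2).deriv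

theorem contDiff_pdt (hu : ContDiff ℝ n (uncurry₃ u)) (hmn : m + 1 ≤ n) :
    ContDiff ℝ m (uncurry₃ (pdt u)) := by
  have hd := hu.differentiable (zero_lt_one.trans_le (le_add_self.trans hmn)).ne'
  convert (hu.fderiv_right hmn).clm_apply (contDiff_const (c := ((0, 0, 1) : ℝ × ℝ × ℝ))) using 1
  exact funext fun p => (hasDerivAt_slice_thd hd p.1 p.2.1 p.2.2).deriv

theorem pdx3_eq_pdx_pdx_pdx : pdx3 u = pdx (pdx (pdx u)) := by
  funext x y t
  simp [pdx3, pdx, iteratedDeriv_succ]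

theorem pdy2_eq_pdy_pdy : pdy2 u = pdy (pdy u) := by
  funext x y t
  simp [pdy2, pdy, iteratedDeriv_succ]

theorem Continuous.uncurry₃_slice (hu : Continuous (uncurry₃ u)) (t : ℝ) :
    Continuous (uncurry fun x y => u x y t) :=
  hu.comp (by fun_prop : Continuous fun p : ℝ × ℝ => (p.1, p.2, t))

end PartialDerivatives

section NonlocalOperator

variable {L : ℝ} {g g' : ℝ → ℝ → ℝ}

theorem pxInv_self (y : ℝ) : pxInv L g L y = 0 := by
  simp [pxInv]

theorem pxInv_eq_integral (x y : ℝ) : pxInv L g x y = ∫ s in L..x, g s y := by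
  rw [pxInv, integral_symm, neg_neg]

theorem hasDerivAt_pxInv_fst {y : ℝ} (hg : Continuous fun s => g s y) (x : ℝ) :
    HasDerivAt (fun x' => pxInv L g x' y) (g x y) x := by
  simp_rw [pxInv_eq_integral]
  exact (hg.integral_hasStrictDerivAt L x).hasDerivAt

theorem hasDerivAt_pxInv_snd (hg : Continuous (uncurry g)) (hg' : Continuous (uncurry g'))
    (hd : ∀ s y, HasDerivAt (g s) (g' s y) y) (x y : ℝ) :
    HasDerivAt (pxInv L g x) (pxInv L g' x y) y :=
  (hasDerivAt_intervalIntegral_of_continuous hg hg' hd y).neg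

theorem continuous_pxInv (hg : Continuous (uncurry g)) : Continuous (uncurry (pxInv L g)) := by
  change Continuous fun p : ℝ × ℝ => pxInv L g p.1 p.2
  simp_rw [pxInv_eq_integral]
  have hg₂ : Continuous (uncurry fun (p : ℝ × ℝ) s => g s p.2) :=
    hg.comp (by fun_prop : Continuous fun q : (ℝ × ℝ) × ℝ => (q.2, q.1.2))
  exact continuous_parametric_intervalIntegral_of_continuous hg₂ continuous_fst

end NonlocalOperator

section EnergyIdentity

variable {L α β t : ℝ} {u : ℝ → ℝ → ℝ → ℝ}

theorem hasDerivAt_energy (hu : ContDiff ℝ 1 (uncurry₃ u)) :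
    HasDerivAt (energy L u) (∫ x in 0..L, ∫ y in 0..L, u x y t * pdt u x y t) t := by
  have hc := hu.continuous
  have hct := (contDiff_pdt hu (m := 0) (by norm_num)).continuous
  have hperm : Continuous fun q : (ℝ × ℝ) × ℝ => (q.1.1, q.2, q.1.2) := by fun_prop
  have hsq : Continuous (uncurry fun (p : ℝ × ℝ) y => u p.1 y p.2 ^ 2) :=
    (hc.comp hperm).pow 2
  have hsq' : Continuous (uncurry fun (p : ℝ × ℝ) y => 2 * (u p.1 y p.2 * pdt u p.1 y p.2)) :=
    continuous_const.mul ((hc.comp hperm).mul (hct.comp hperm))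
  have hinner (x τ : ℝ) : HasDerivAt (fun τ => ∫ y in 0..L, u x y τ ^ 2)
      (∫ y in 0..L, 2 * (u x y τ * pdt u x y τ)) τ := by
    have hx : Continuous fun q : ℝ × ℝ => (x, q.1, q.2) := by fun_prop
    have hsqx : Continuous (uncurry fun y τ => u x y τ ^ 2) := (hc.comp hx).pow 2
    have hsqx' : Continuous (uncurry fun y τ => 2 * (u x y τ * pdt u x y τ)) :=
      continuous_const.mul ((hc.comp hx).mul (hct.comp hx))
    exact hasDerivAt_intervalIntegral_of_continuous hsqx hsqx'
      (fun y τ => ((hasDerivAt_pdt (hu.differentiable one_ne_zero) x y τ).pow 2).congr_deriv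
        (by ring)) τ
  have hE : Continuous (uncurry fun x τ => ∫ y in 0..L, u x y τ ^ 2) :=
    continuous_parametric_intervalIntegral_of_continuous' hsq 0 L
  have hE' : Continuous (uncurry fun x τ => ∫ y in 0..L, 2 * (u x y τ * pdt u x y τ)) :=
    continuous_parametric_intervalIntegral_of_continuous' hsq' 0 L
  refine ((hasDerivAt_intervalIntegral_of_continuous hE hE' hinner t).const_mul
    (1 / 2 : ℝ)).congr_deriv ?_
  simp only [intervalIntegral.integral_const_mul]
  ring

theorem integral_integral_mul_pdt_eq (hu : ContDiff ℝ 3 (uncurry₃ u)) (hL : 0 ≤ L)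
    (hpde : ∀ x ∈ Ioo 0 L, ∀ y ∈ Ioo 0 L, pdt u x y t + pdx u x y t + pdx3 u x y t
      + pxInv L (fun s y' => pdy2 u s y' t) x y = 0) :
    ∫ x in 0..L, ∫ y in 0..L, u x y t * pdt u x y t
      = -((∫ x in 0..L, ∫ y in 0..L, u x y t * pdx u x y t)
        + (∫ x in 0..L, ∫ y in 0..L, u x y t * pdx3 u x y t)
        + ∫ x in 0..L, ∫ y in 0..L, u x y t * pxInv L (fun s y' => pdy2 u s y' t) x y) := by
  have hc := hu.continuous.uncurry₃_slice t
  have hc₁ := (contDiff_pdx hu (m := 2) (by norm_num)).continuous.uncurry₃_slice t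
  have hc₃ : Continuous (uncurry fun x y => pdx3 u x y t) := by
    rw [pdx3_eq_pdx_pdx_pdx]
    exact (contDiff_pdx (contDiff_pdx (contDiff_pdx hu (m := 2) (by norm_num)) (m := 1)
      (by norm_num)) (m := 0) (by norm_num)).continuous.uncurry₃_slice t
  have hcq : Continuous (uncurry (pxInv L fun s y' => pdy2 u s y' t)) := by
    rw [pdy2_eq_pdy_pdy]
    exact continuous_pxInv ((contDiff_pdy (contDiff_pdy hu (m := 2) (by norm_num)) (m := 1)
      (by norm_num)).continuous.uncurry₃_slice t)
  have hpde' : ∀ x ∈ Ioo 0 L, ∀ y ∈ Ioo 0 L, u x y t * pdt u x y t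
      = -(u x y t * pdx u x y t + u x y t * pdx3 u x y t
        + u x y t * pxInv L (fun s y' => pdy2 u s y' t) x y) := fun x hx y hy => by
    linear_combination u x y t * hpde x hx y hy
  rw [integral_congr_Ioo_of_le hL fun x hx => integral_congr_Ioo_of_le hL fun y hy =>
    hpde' x hx y hy]
  simp_rw [intervalIntegral.integral_neg]
  have h₁ : Continuous (uncurry fun x y => u x y t * pdx u x y t) := hc.mul hc₁
  have h₃ : Continuous (uncurry fun x y => u x y t * pdx3 u x y t) := hc.mul hc₃
  have h₁₃ : Continuous (uncurry fun x y => u x y t * pdx u x y t + u x y t * pdx3 u x y t) :=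
    h₁.add h₃
  have hq : Continuous (uncurry fun x y => u x y t * pxInv L (fun s y' => pdy2 u s y' t) x y) :=
    hc.mul hcq
  rw [intervalIntegral_intervalIntegral_add h₁₃ hq,
    intervalIntegral_intervalIntegral_add h₁ h₃]

theorem integral_integral_mul_pdx_eq_zero (hu : ContDiff ℝ 1 (uncurry₃ u)) (hL : 0 ≤ L)
    (hu0 : ∀ y ∈ Icc 0 L, u 0 y t = 0) (huL : ∀ y ∈ Icc 0 L, u L y t = 0) :
    ∫ x in 0..L, ∫ y in 0..L, u x y t * pdx u x y t = 0 := by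
  rw [integral_integral_mul_deriv_fst (hu.continuous.uncurry₃_slice t)
    ((contDiff_pdx hu (m := 0) (by norm_num)).continuous.uncurry₃_slice t)
    (fun x y => hasDerivAt_pdx (hu.differentiable one_ne_zero) x y t)]
  refine (integral_congr fun y hy => ?_).trans integral_zero
  rw [uIcc_of_le hL] at hy
  simp [hu0 y hy, huL y hy]

theorem integral_integral_mul_pdx3 (hu : ContDiff ℝ 3 (uncurry₃ u)) (hL : 0 ≤ L)
    (hu0 : ∀ y ∈ Icc 0 L, u 0 y t = 0) (huL : ∀ y ∈ Icc 0 L, u L y t = 0)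
    (hux : ∀ y ∈ Icc 0 L, pdx u L y t = α * pdx u 0 y t) :
    ∫ x in 0..L, ∫ y in 0..L, u x y t * pdx3 u x y t
      = (1 - α ^ 2) / 2 * ∫ y in 0..L, pdx u 0 y t ^ 2 := by
  have h₁ := contDiff_pdx hu (m := 2) (by norm_num)
  have h₂ := contDiff_pdx h₁ (m := 1) (by norm_num)
  have h₃ := contDiff_pdx h₂ (m := 0) (by norm_num)
  rw [pdx3_eq_pdx_pdx_pdx, integral_integral_mul_third_deriv_fst
    (hu.continuous.uncurry₃_slice t) (h₃.continuous.uncurry₃_slice t)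
    (fun x y => hasDerivAt_pdx (hu.differentiable (by norm_num)) x y t)
    (fun x y => hasDerivAt_pdx (h₁.differentiable (by norm_num)) x y t)
    (fun x y => hasDerivAt_pdx (h₂.differentiable one_ne_zero) x y t),
    ← intervalIntegral.integral_const_mul]
  refine integral_congr fun y hy => ?_
  rw [uIcc_of_le hL] at hy
  simp only [hu0 y hy, huL y hy, hux y hy]
  ring

theorem integral_integral_mul_pxInv_pdy2 (hu : ContDiff ℝ 3 (uncurry₃ u)) (hL : 0 ≤ L)
    (huLL : u L L t = 0) (huy : ∀ x ∈ Icc 0 L, pdy u x L t = β * pdx u x L t)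
    (huy0 : ∀ x ∈ Icc 0 L, pdy u x 0 t = 0) :
    ∫ x in 0..L, ∫ y in 0..L, u x y t * pxInv L (fun s y' => pdy2 u s y' t) x y
      = β * (∫ x in 0..L, u x L t ^ 2)
        + 1 / 2 * ∫ y in 0..L, pxInv L (fun s y' => pdy u s y' t) 0 y ^ 2 := by
  have hd := hu.differentiable (by norm_num)
  have h₁ := contDiff_pdy hu (m := 2) (by norm_num)
  have h₂ := contDiff_pdy h₁ (m := 1) (by norm_num)
  have hc₁ := h₁.continuous.uncurry₃_slice t
  have hc₂ := h₂.continuous.uncurry₃_slice t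
  have hsub (x : ℝ) (hx : x ∈ uIcc 0 L) : uIcc x L ⊆ Icc 0 L := by
    rw [uIcc_of_le hL] at hx
    rw [uIcc_of_le hx.2]
    exact Icc_subset_Icc_left hx.1
  have hwL (x : ℝ) (hx : x ∈ uIcc 0 L) : pxInv L (fun s y' => pdy u s y' t) x L = β * u x L t := by
    rw [pxInv, integral_congr fun s hs => huy s (hsub x hx hs), intervalIntegral.integral_const_mul,
      integral_eq_sub_of_hasDerivAt (fun s _ => hasDerivAt_pdx hd s L t)
        (((contDiff_pdx hu (m := 0) (by norm_num)).continuous.uncurry₃_slice t).uncurry_right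
          L |>.intervalIntegrable _ _), huLL]
    ring
  have hw0 (x : ℝ) (hx : x ∈ uIcc 0 L) : pxInv L (fun s y' => pdy u s y' t) x 0 = 0 := by
    rw [pxInv, integral_congr fun s hs => huy0 s (hsub x hx hs)]
    simp
  have hbdry_y : ∫ x in 0..L, (u x L t * pxInv L (fun s y' => pdy u s y' t) x L
      - u x 0 t * pxInv L (fun s y' => pdy u s y' t) x 0) = β * ∫ x in 0..L, u x L t ^ 2 := by
    rw [← intervalIntegral.integral_const_mul]
    refine integral_congr fun x hx => ?_
    simp only [hwL x hx, hw0 x hx]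
    ring
  have hbdry_x : ∫ y in 0..L, (pxInv L (fun s y' => pdy u s y' t) L y ^ 2 / 2
      - pxInv L (fun s y' => pdy u s y' t) 0 y ^ 2 / 2)
      = -(1 / 2 * ∫ y in 0..L, pxInv L (fun s y' => pdy u s y' t) 0 y ^ 2) := by
    rw [← intervalIntegral.integral_const_mul, ← intervalIntegral.integral_neg]
    refine integral_congr fun y _ => ?_
    simp only [pxInv_self]
    ring
  rw [pdy2_eq_pdy_pdy, integral_integral_mul_deriv_snd (hu.continuous.uncurry₃_slice t) hc₁
    (continuous_pxInv hc₁) (continuous_pxInv hc₂) (fun x y => hasDerivAt_pdy hd x y t)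
    (fun x y => hasDerivAt_pxInv_fst (hc₁.uncurry_right y) x)
    (fun x y => hasDerivAt_pxInv_snd hc₁ hc₂
      (fun s y => hasDerivAt_pdy (h₁.differentiable (by norm_num)) s y t) x y),
    hbdry_y, hbdry_x]
  ring

end EnergyIdentity

theorem kp_energy_derivative_general (L T α β : ℝ) (hL : 0 < L)
    (u : ℝ → ℝ → ℝ → ℝ) (hu : IsKPSolution L T α β u) :
    ∀ t ∈ Set.Ioo (0:ℝ) T,
      HasDerivAt (energy L u)
        (-((1 - α^2)/2) * (∫ y in (0:ℝ)..L, (pdx u 0 y t)^2)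
          - β * (∫ x in (0:ℝ)..L, (u x L t)^2)
          - (1/2) * (∫ y in (0:ℝ)..L, (pxInv L (fun s y' => pdy u s y' t) 0 y)^2)) t := by
  obtain ⟨hreg, hpde, hbc_x, hbc_y⟩ := hu
  intro t ht
  have hu : ContDiff ℝ 3 (uncurry₃ u) := hreg
  have htT : t ∈ Icc 0 T := Ioo_subset_Icc_self ht
  have hu0 (y) (hy : y ∈ Icc 0 L) := (hbc_x y hy t htT).1
  have huL (y) (hy : y ∈ Icc 0 L) := (hbc_x y hy t htT).2.1
  have hux (y) (hy : y ∈ Icc 0 L) := (hbc_x y hy t htT).2.2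
  refine (hasDerivAt_energy (hu.of_le (by norm_num))).congr_deriv ?_
  rw [integral_integral_mul_pdt_eq hu hL.le fun x hx y hy => hpde x hx y hy t ht,
    integral_integral_mul_pdx_eq_zero (hu.of_le (by norm_num)) hL.le hu0 huL,
    integral_integral_mul_pdx3 hu hL.le hu0 huL hux,
    integral_integral_mul_pxInv_pdy2 hu hL.le (huL L (right_mem_Icc.2 hL.le))
      (fun x hx => (hbc_y x hx t htT).1) (fun x hx => (hbc_y x hx t htT).2)]
  ring

/-- Energy dissipation identity: for a classical solution of the closed-loop linear
KP-II system, the energy is differentiable on `(0,T)` with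
`E′(t) = -((1-α²)/2) ∫₀^L u_x(0,y,t)² dy - β ∫₀^L u(x,L,t)² dx
        - ½ ∫₀^L ((∂ₓ⁻¹ u_y)(0,y,t))² dy`. -/
theorem kp_energy_derivative (L T α β : ℝ) (hL : 0 < L) (hT : 0 < T)
    (hα0 : 0 < |α|) (hα1 : |α| < 1) (hβ : 0 < β)
    (u : ℝ → ℝ → ℝ → ℝ) (hu : IsKPSolution L T α β u) :
    ∀ t ∈ Set.Ioo (0:ℝ) T,
      HasDerivAt (energy L u)
        (-((1 - α^2)/2) * (∫ y in (0:ℝ)..L, (pdx u 0 y t)^2)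
          - β * (∫ x in (0:ℝ)..L, (u x L t)^2)
          - (1/2) * (∫ y in (0:ℝ)..L, (pxInv L (fun s y' => pdy u s y' t) 0 y)^2)) t :=
  kp_energy_derivative_general L T α β hL u hu

end
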